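/- Let W̃ be an irreducible affine Weyl group and x ∈ W̃. For α ∈ Φ, set α₀ = α if α ∈ Φ⁺ and α₀ = α + δ if α ∈ Φ⁻. If α₀ + kδ ∈ Φ_x with k ≥ 0, then α₀, α₀+δ, …, α₀+kδ are all contained in Φ_x. -/

import Mathlib

open scoped RealInnerProductSpace

namespace AffineBiclosed

variable {V : Type*} [NormedAddCommGroup V] [InnerProductSpace ℝ V]

/-- An irreducible crystallographic root system in the Euclidean space `V`. -/
structure IsIrrCrystRootSystem (Φ : Set V) : Prop where
  finite : Φ.Finite
  nonzero : (0 : V) ∉ Φ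
  spanning : Submodule.span ℝ Φ = ⊤
  reflect_mem : ∀ α ∈ Φ, ∀ β ∈ Φ, β - (2 * ⟪β, α⟫ / ⟪α, α⟫) • α ∈ Φ
  crystallographic : ∀ α ∈ Φ, ∀ β ∈ Φ, ∃ k : ℤ, (k : ℝ) = 2 * ⟪β, α⟫ / ⟪α, α⟫
  reduced : ∀ α ∈ Φ, ∀ t : ℝ, t • α ∈ Φ → t = 1 ∨ t = -1
  irreducible : ∀ Φ₁ Φ₂ : Set V, Φ₁ ∪ Φ₂ = Φ → Disjoint Φ₁ Φ₂ →
      (∀ α ∈ Φ₁, ∀ β ∈ Φ₂, ⟪α, β⟫ = 0) → Φ₁ = ∅ ∨ Φ₂ = ∅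

/-- `Pos` is a positive system of the root system `Φ`. -/
def IsPositiveSystem (Φ Pos : Set V) : Prop :=
  ∃ f : V →ₗ[ℝ] ℝ, (∀ α ∈ Φ, f α ≠ 0) ∧ Pos = {α ∈ Φ | 0 < f α}

/-- The simple system of a positive system: its indecomposable elements. -/
def simples (Pos : Set V) : Set V :=
  {α ∈ Pos | ¬ ∃ β ∈ Pos, ∃ γ ∈ Pos, α = β + γ}

/-- The root subsystem of `Φ` generated by a set `Δ` of simple roots. -/
def subsys (Φ Δ : Set V) : Set V := Φ ∩ (Submodule.span ℝ Δ : Set V)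

/-- The biclosed set `Ψ⁺_{L,M} = (Ψ⁺ \ Φ_L) ∪ Φ_M` in `Φ`. -/
def posLM (Φ Pos L M : Set V) : Set V := (Pos \ subsys Φ L) ∪ subsys Φ M

section Closure

variable {E : Type*} [AddCommGroup E] [Module ℝ E]

/-- `Γ` is closed in `T`. -/
def IsClosedIn (T Γ : Set E) : Prop :=
  Γ ⊆ T ∧ ∀ a ∈ Γ, ∀ b ∈ Γ, ∀ k₁ k₂ : ℝ, 0 ≤ k₁ → 0 ≤ k₂ →
    k₁ • a + k₂ • b ∈ T → k₁ • a + k₂ • b ∈ Γ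

/-- `Γ` is biclosed in `T`. -/
def IsBiclosedIn (T Γ : Set E) : Prop := IsClosedIn T Γ ∧ IsClosedIn T (T \ Γ)

/-- The closure of `X` in `T`: the smallest subset of `T` closed in `T` containing `X`. -/
def closureIn (T X : Set E) : Set E := ⋂₀ {Γ : Set E | X ⊆ Γ ∧ IsClosedIn T Γ}

end Closure

/-- For `Γ ⊆ Φ`, the set `Γ̂ ⊆ V × ℝ`, where `δ = (0,1)`; positivity is measured by the
standard positive system `Pos`. -/
def hat (Pos Γ : Set V) : Set (V × ℝ) :=
  {x | ∃ α ∈ Γ, ∃ n : ℕ, x.1 = α ∧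
    ((α ∈ Pos ∧ x.2 = (n : ℝ)) ∨ (α ∉ Pos ∧ x.2 = (n : ℝ) + 1))}

/-- The reflection in the affine root `a`, as a function on `V × ℝ`, with respect to the
degenerate bilinear form `⟨(v,s),(w,t)⟩ = ⟪v,w⟫`. -/
noncomputable def reflVec (a : V × ℝ) (x : V × ℝ) : V × ℝ :=
  x - (2 * ⟪x.1, a.1⟫ / ⟪a.1, a.1⟫) • a

theorem reflVec_involutive (a : V × ℝ) : Function.Involutive (reflVec a) := by
  intro x
  by_cases h : ⟪a.1, a.1⟫ = 0
  · simp only [reflVec, h, div_zero, zero_smul, sub_zero]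
  · unfold reflVec
    have h1 : (x - (2 * ⟪x.1, a.1⟫ / ⟪a.1, a.1⟫) • a).1
        = x.1 - (2 * ⟪x.1, a.1⟫ / ⟪a.1, a.1⟫) • a.1 := rfl
    rw [h1]
    have key : 2 * ⟪x.1 - (2 * ⟪x.1, a.1⟫ / ⟪a.1, a.1⟫) • a.1, a.1⟫ / ⟪a.1, a.1⟫
        = -(2 * ⟪x.1, a.1⟫ / ⟪a.1, a.1⟫) := by
      rw [inner_sub_left, real_inner_smul_left]
      field_simp
      ring
    rw [key, neg_smul, sub_neg_eq_add, sub_add_cancel]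

/-- The reflection in the affine root `a`, as a permutation of `V × ℝ`. -/
noncomputable def reflPerm (a : V × ℝ) : Equiv.Perm (V × ℝ) :=
  Function.Involutive.toPerm _ (reflVec_involutive a)

/-- The affine Weyl group of `Φ`, realized as the group of permutations of `V × ℝ`
generated by the reflections in the affine roots. -/
noncomputable def affineWeyl (Φ Pos : Set V) : Subgroup (Equiv.Perm (V × ℝ)) :=
  Subgroup.closure (reflPerm '' hat Pos Φ)

/-- The inversion set `Φ_w = {a ∈ Φ̃⁺ | w⁻¹ a ∈ −Φ̃⁺}`. -/
def invSetOf (Φ Pos : Set V) (w : Equiv.Perm (V × ℝ)) : Set (V × ℝ) :=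
  {a ∈ hat Pos Φ | -(w⁻¹ a) ∈ hat Pos Φ}

/-- The product of the reflections in the listed affine roots. -/
noncomputable def wordProd (l : List (V × ℝ)) : Equiv.Perm (V × ℝ) :=
  (l.map reflPerm).prod

/-- The simple affine roots: the indecomposable elements of `Φ̃⁺`. -/
def affSimples (Φ Pos : Set V) : Set (V × ℝ) :=
  {a ∈ hat Pos Φ | ¬ ∃ b ∈ hat Pos Φ, ∃ c ∈ hat Pos Φ, a = b + c}

/-- `l` is a reduced word (in the simple affine reflections). -/
def IsReducedWord (Φ Pos : Set V) (l : List (V × ℝ)) : Prop :=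
  (∀ a ∈ l, a ∈ affSimples Φ Pos) ∧
    ∀ l' : List (V × ℝ), (∀ a ∈ l', a ∈ affSimples Φ Pos) →
      wordProd l' = wordProd l → l.length ≤ l'.length

/-- The length-`n` prefix of an infinite word. -/
def prefixWord (ω : ℕ → V × ℝ) (n : ℕ) : List (V × ℝ) :=
  List.ofFn (fun i : Fin n => ω i)

/-- `ω` is an infinite reduced expression. -/
def IsInfRedExpr (Φ Pos : Set V) (ω : ℕ → V × ℝ) : Prop :=
  ∀ n, IsReducedWord Φ Pos (prefixWord ω n)

/-- The inversion set of an infinite reduced expression. -/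
def infInvSet (Φ Pos : Set V) (ω : ℕ → V × ℝ) : Set (V × ℝ) :=
  ⋃ n, invSetOf Φ Pos (wordProd (prefixWord ω n))

/-- The action `x·Γ = (Φ_x \ x(−Γ)) ∪ (x(Γ) \ (−Φ_x))` of the affine Weyl group on
biclosed sets. -/
def dotAct (Φ Pos : Set V) (x : Equiv.Perm (V × ℝ)) (Γ : Set (V × ℝ)) : Set (V × ℝ) :=
  (invSetOf Φ Pos x \ (⇑x '' (-Γ))) ∪ ((⇑x '' Γ) \ (-(invSetOf Φ Pos x)))

end AffineBiclosed

/-! The reflections generating `W̃` only read the `V`-component of their argument, so every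
`x ∈ W̃` commutes with translation by `δ`. Hence `−x⁻¹(α₀ + jδ) = −x⁻¹(α₀ + kδ) + (k - j)δ`,
which lies in `Φ̃⁺` because `Φ̃⁺` is closed under adding `δ`. -/

namespace AffineBiclosed

theorem add_natCast_snd_mem_hat {V : Type*} [NormedAddCommGroup V] {Pos Γ : Set V}
    {p : V × ℝ} (hp : p ∈ hat Pos Γ) (n : ℕ) : p + (0, (n : ℝ)) ∈ hat Pos Γ := by
  obtain ⟨α, hα, m, hfst, hsnd⟩ := hp
  refine ⟨α, hα, m + n, by simpa using hfst, ?_⟩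
  simp only [Prod.snd_add, Nat.cast_add]
  rcases hsnd with ⟨hpos, hm⟩ | ⟨hneg, hm⟩
  · exact Or.inl ⟨hpos, by rw [hm]⟩
  · exact Or.inr ⟨hneg, by rw [hm]; ring⟩

variable {V : Type*} [NormedAddCommGroup V] [InnerProductSpace ℝ V]

theorem reflVec_add_snd (a x : V × ℝ) (t : ℝ) :
    reflVec a (x + (0, t)) = reflVec a x + (0, t) := by
  simp only [reflVec, Prod.fst_add, add_zero]
  abel

theorem affineWeyl_le_centralizer_addRight_snd (Φ Pos : Set V) :
    affineWeyl Φ Pos ≤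
      Subgroup.centralizer (Set.range fun t : ℝ => Equiv.addRight ((0 : V), t)) := by
  rw [affineWeyl, Subgroup.closure_le]
  rintro _ ⟨a, -, rfl⟩ _ ⟨t, rfl⟩
  ext1 x
  exact (reflVec_add_snd a x t).symm

theorem affineWeyl_apply_add_snd {Φ Pos : Set V} {w : Equiv.Perm (V × ℝ)}
    (hw : w ∈ affineWeyl Φ Pos) (x : V × ℝ) (t : ℝ) :
    w (x + (0, t)) = w x + (0, t) :=
  (DFunLike.congr_fun (affineWeyl_le_centralizer_addRight_snd Φ Pos hw _ ⟨t, rfl⟩) x).symm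

theorem mem_invSetOf_of_add_natCast_snd_mem {Φ Pos : Set V} {w : Equiv.Perm (V × ℝ)}
    (hw : w ∈ affineWeyl Φ Pos) {p : V × ℝ} (hp : p ∈ hat Pos Φ) {n : ℕ}
    (h : p + (0, (n : ℝ)) ∈ invSetOf Φ Pos w) : p ∈ invSetOf Φ Pos w := by
  refine ⟨hp, ?_⟩
  have hshifted := add_natCast_snd_mem_hat h.2 n
  rwa [affineWeyl_apply_add_snd (inv_mem hw), neg_add, neg_add_cancel_right] at hshifted

end AffineBiclosed

open AffineBiclosed in
theorem delta_string_downward_closed_general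
    {V : Type*} [NormedAddCommGroup V] [InnerProductSpace ℝ V]
    {Φ Pos : Set V}
    {x : Equiv.Perm (V × ℝ)} (hx : x ∈ affineWeyl Φ Pos)
    {α : V} (hα : α ∈ Φ) {c : ℝ}
    (hc : (α ∈ Pos ∧ c = 0) ∨ (α ∉ Pos ∧ c = 1)) {k : ℕ}
    (h : ((α, c + (k : ℝ)) : V × ℝ) ∈ invSetOf Φ Pos x) :
    ∀ j : ℕ, j ≤ k → ((α, c + (j : ℝ)) : V × ℝ) ∈ invSetOf Φ Pos x := by
  intro j hj
  have hbase : ((α, c) : V × ℝ) ∈ hat Pos Φ := ⟨α, hα, 0, rfl, by simpa using hc⟩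
  have hj_mem : ((α, c + (j : ℝ)) : V × ℝ) ∈ hat Pos Φ := by
    simpa using add_natCast_snd_mem_hat hbase j
  refine mem_invSetOf_of_add_natCast_snd_mem hx hj_mem (n := k - j) ?_
  have hstring : ((α, c + (j : ℝ)) : V × ℝ) + (0, ((k - j : ℕ) : ℝ)) = (α, c + (k : ℝ)) :=
    Prod.ext (add_zero α) (by simp only [Prod.snd_add]; push_cast [hj]; ring)
  exact hstring ▸ h

open AffineBiclosed in
/-- Let `x ∈ W̃`. For `α ∈ Φ`, set `α₀ = α` if `α ∈ Φ⁺` and `α₀ = α + δ` if `α ∈ Φ⁻`.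
If `α₀ + kδ ∈ Φ_x` with `k ≥ 0`, then `α₀, α₀+δ, …, α₀+kδ` all lie in `Φ_x`. -/
theorem delta_string_downward_closed
    {V : Type*} [NormedAddCommGroup V] [InnerProductSpace ℝ V]
    {Φ Pos : Set V} (hΦ : IsIrrCrystRootSystem Φ) (hPos : IsPositiveSystem Φ Pos)
    {x : Equiv.Perm (V × ℝ)} (hx : x ∈ affineWeyl Φ Pos)
    {α : V} (hα : α ∈ Φ) {c : ℝ}
    (hc : (α ∈ Pos ∧ c = 0) ∨ (α ∉ Pos ∧ c = 1)) {k : ℕ}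
    (h : ((α, c + (k : ℝ)) : V × ℝ) ∈ invSetOf Φ Pos x) :
    ∀ j : ℕ, j ≤ k → ((α, c + (j : ℝ)) : V × ℝ) ∈ invSetOf Φ Pos x :=
  delta_string_downward_closed_general hx hα hc h
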